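/- arXiv:math/0011078 — 5 statements merged into one kernel-verified Lean document; each statement's English description precedes it below -/
import Mathlib

section
/- Let f : ℝ → ℝ be a function and let a, b be real numbers with a < b. For every positive integer N, the partial sum of the exhaustion series up to level N collapses to a dyadic Riemann sum: ∑_{n=1}^{N} ∑_{m=1}^{2^n - 1} (-1)^{m+1} 2^{-n} f(a + m(b-a)/2^n) = 2^{-N} ∑_{m=1}^{2^N - 1} f(a + m(b-a)/2^N). -/
/-!
Write `S n = 2⁻ⁿ ∑_{0<m<2ⁿ} f (a + m (b - a) / 2ⁿ)` for the dyadic Riemann sum of level `n`.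
The points of level `n` are the even-indexed points of level `n + 1`, and the alternating
sum over `m` is the full sum minus twice its even part, so the exhaustion term of level
`n + 1` equals `S (n + 1) - S n`. The partial sums therefore telescope to `S N - S 0 = S N`.
-/

open Finset

section AlternatingSum

variable {R : Type*} [CommRing R]

theorem sum_range_two_mul_neg_one_pow_mul (g : ℕ → R) (M : ℕ) :
    ∑ m ∈ range (2 * M), (-1) ^ (m + 1) * g m
      = ∑ m ∈ range (2 * M), g m - 2 * ∑ k ∈ range M, g (2 * k) := by
  induction M with
  | zero => simp
  | succ M ih =>
    rw [mul_add, mul_one, sum_range_succ, sum_range_succ, ih, sum_range_succ, sum_range_succ,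
      sum_range_succ]
    simp only [pow_succ, pow_mul]
    ring

theorem sum_Icc_one_sub_one_eq_sum_range_sub (h : ℕ → R) {K : ℕ} (hK : 0 < K) :
    ∑ m ∈ Icc 1 (K - 1), h m = ∑ m ∈ range K, h m - h 0 := by
  rw [range_eq_Ico, sum_eq_sum_Ico_succ_bot hK, add_sub_cancel_left,
    Icc_sub_one_right_eq_Ico_of_not_isMin (not_isMin_iff_ne_bot.2 hK.ne')]

theorem sum_Icc_two_mul_sub_one_neg_one_pow_mul (g : ℕ → R) {M : ℕ} (hM : 0 < M) :
    ∑ m ∈ Icc 1 (2 * M - 1), (-1) ^ (m + 1) * g m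
      = ∑ m ∈ Icc 1 (2 * M - 1), g m - 2 * ∑ k ∈ Icc 1 (M - 1), g (2 * k) := by
  rw [sum_Icc_one_sub_one_eq_sum_range_sub _ (by omega),
    sum_Icc_one_sub_one_eq_sum_range_sub _ (by omega),
    sum_Icc_one_sub_one_eq_sum_range_sub _ hM, sum_range_two_mul_neg_one_pow_mul]
  simp only [mul_zero]
  ring

end AlternatingSum

noncomputable section

def dyadicRiemannSum (f : ℝ → ℝ) (a b : ℝ) (n : ℕ) : ℝ :=
  1 / 2 ^ n * ∑ m ∈ Icc (1 : ℕ) (2 ^ n - 1), f (a + (m : ℝ) * (b - a) / 2 ^ n)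

def exhaustionTerm (f : ℝ → ℝ) (a b : ℝ) (n : ℕ) : ℝ :=
  ∑ m ∈ Icc (1 : ℕ) (2 ^ n - 1), (-1 : ℝ) ^ (m + 1) / 2 ^ n * f (a + (m : ℝ) * (b - a) / 2 ^ n)

end

@[simp]
theorem dyadicRiemannSum_zero (f : ℝ → ℝ) (a b : ℝ) : dyadicRiemannSum f a b 0 = 0 := by
  simp [dyadicRiemannSum]

theorem exhaustionTerm_succ (f : ℝ → ℝ) (a b : ℝ) (n : ℕ) :
    exhaustionTerm f a b (n + 1) = dyadicRiemannSum f a b (n + 1) - dyadicRiemannSum f a b n := by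
  set g : ℕ → ℝ := fun m => f (a + (m : ℝ) * (b - a) / 2 ^ (n + 1))
  have hterm : exhaustionTerm f a b (n + 1)
      = (∑ m ∈ Icc 1 (2 ^ (n + 1) - 1), (-1) ^ (m + 1) * g m) / 2 ^ (n + 1) := by
    rw [exhaustionTerm, sum_div]
    exact sum_congr rfl fun m _ => by ring
  have hfine :
      dyadicRiemannSum f a b (n + 1) = (∑ m ∈ Icc 1 (2 ^ (n + 1) - 1), g m) / 2 ^ (n + 1) :=
    one_div_mul_eq_div _ _
  have hcoarse : dyadicRiemannSum f a b n = (∑ k ∈ Icc 1 (2 ^ n - 1), g (2 * k)) / 2 ^ n := by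
    rw [dyadicRiemannSum, one_div_mul_eq_div]
    congr 1
    refine sum_congr rfl fun k _ => ?_
    simp only [g]
    congr 2
    push_cast
    field_simp
    ring
  have hsplit := sum_Icc_two_mul_sub_one_neg_one_pow_mul g (Nat.two_pow_pos n)
  rw [← pow_succ'] at hsplit
  rw [hterm, hfine, hcoarse, hsplit, pow_succ]
  field_simp
  ring

theorem stmt_0_general (f : ℝ → ℝ) (a b : ℝ) (N : ℕ) :
    ∑ n ∈ Finset.Icc (1:ℕ) N, ∑ m ∈ Finset.Icc (1:ℕ) (2 ^ n - 1),
        (-1 : ℝ) ^ (m + 1) / 2 ^ n * f (a + (m:ℝ) * (b - a) / 2 ^ n)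
      = 1 / 2 ^ N * ∑ m ∈ Finset.Icc (1:ℕ) (2 ^ N - 1), f (a + (m:ℝ) * (b - a) / 2 ^ N) := by
  change ∑ n ∈ Icc 1 N, exhaustionTerm f a b n = dyadicRiemannSum f a b N
  induction N with
  | zero => simp
  | succ N ih =>
    rw [sum_Icc_succ_top (by omega), ih, exhaustionTerm_succ]
    ring

theorem stmt_0 (f : ℝ → ℝ) (a b : ℝ) (hab : a < b) (N : ℕ) (hN : 0 < N) :
    ∑ n ∈ Finset.Icc (1:ℕ) N, ∑ m ∈ Finset.Icc (1:ℕ) (2 ^ n - 1),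
        (-1 : ℝ) ^ (m + 1) / 2 ^ n * f (a + (m:ℝ) * (b - a) / 2 ^ n)
      = 1 / 2 ^ N * ∑ m ∈ Finset.Icc (1:ℕ) (2 ^ N - 1), f (a + (m:ℝ) * (b - a) / 2 ^ N) :=
  stmt_0_general f a b N
end

section
/- For every nonzero real number a, sin(a)/a = cos²(a/2) + ∑_{n=1}^{∞} sin²(a/2^{n+1}) ∏_{m=1}^{n} cos(a/2^m), where the series on the right converges. -/
/-!
Halving the angle repeatedly in `sin (2y) = 2 sin y cos y` gives
`sinc (x / 2^N) * ∏_{m=1}^N cos (x / 2^m) = sinc x`, so the cosine products tend to `sinc x`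
(Euler's product). Halving the angle in `cos (2y) = 2 cos² y - 1` instead shows that the series
telescopes: `cos² (x/2)` plus its `N`-th partial sum equals `(∏_{m=1}^N cos (x / 2^m)) cos² (x / 2^(N+1))`,
which therefore also tends to `sinc x`.
-/

open Filter Finset Real Topology

namespace Real

lemma two_pow_mul_sin_div_two_pow_mul_prod_cos (x : ℝ) (N : ℕ) :
    2 ^ N * sin (x / 2 ^ N) * ∏ m ∈ Icc 1 N, cos (x / 2 ^ m) = sin x := by
  induction N with
  | zero => simp
  | succ N ih =>
    have h_double : sin (x / 2 ^ N) = 2 * sin (x / 2 ^ (N + 1)) * cos (x / 2 ^ (N + 1)) := by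
      rw [← sin_two_mul]; ring_nf
    rw [prod_Icc_succ_top (by omega), ← ih, h_double]
    ring

lemma sinc_div_two_pow_mul_prod_cos (x : ℝ) (N : ℕ) :
    sinc (x / 2 ^ N) * ∏ m ∈ Icc 1 N, cos (x / 2 ^ m) = sinc x := by
  rcases eq_or_ne x 0 with rfl | hx
  · simp
  have hx' : x / 2 ^ N ≠ 0 := div_ne_zero hx (by positivity)
  rw [sinc_of_ne_zero hx, sinc_of_ne_zero hx', ← two_pow_mul_sin_div_two_pow_mul_prod_cos x N]
  field_simp

lemma tendsto_div_two_pow_nhds_zero (x : ℝ) : Tendsto (fun N : ℕ ↦ x / 2 ^ N) atTop (𝓝 0) :=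
  tendsto_const_nhds.div_atTop (tendsto_pow_atTop_atTop_of_one_lt one_lt_two)

lemma tendsto_prod_cos_div_two_pow (x : ℝ) :
    Tendsto (fun N : ℕ ↦ ∏ m ∈ Icc 1 N, cos (x / 2 ^ m)) atTop (𝓝 (sinc x)) := by
  have h_sinc : Tendsto (fun N : ℕ ↦ sinc (x / 2 ^ N)) atTop (𝓝 1) := by
    simpa [Function.comp_def] using (continuous_sinc.tendsto 0).comp (tendsto_div_two_pow_nhds_zero x)
  have h_eq : ∀ᶠ N : ℕ in atTop,
      sinc x * (sinc (x / 2 ^ N))⁻¹ = ∏ m ∈ Icc 1 N, cos (x / 2 ^ m) := by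
    filter_upwards [h_sinc.eventually_ne one_ne_zero] with N hN
    rw [← sinc_div_two_pow_mul_prod_cos x N]
    field_simp
  simpa using (tendsto_const_nhds.mul (h_sinc.inv₀ one_ne_zero)).congr' h_eq

lemma cos_sq_add_sum_sin_sq_mul_prod_cos (x : ℝ) (N : ℕ) :
    cos (x / 2) ^ 2 + ∑ n ∈ Icc 1 N, sin (x / 2 ^ (n + 1)) ^ 2 * ∏ m ∈ Icc 1 n, cos (x / 2 ^ m)
      = (∏ m ∈ Icc 1 N, cos (x / 2 ^ m)) * cos (x / 2 ^ (N + 1)) ^ 2 := by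
  induction N with
  | zero => simp
  | succ N ih =>
    have h_double : cos (x / 2 ^ (N + 1)) = 2 * cos (x / 2 ^ (N + 2)) ^ 2 - 1 := by
      rw [← cos_two_mul]; ring_nf
    rw [sum_Icc_succ_top (by omega), prod_Icc_succ_top (by omega), ← add_assoc, ih, h_double,
      sin_sq]
    ring

end Real

theorem stmt_2 (a : ℝ) (ha : a ≠ 0) :
    ∃ S : ℝ,
      Filter.Tendsto
        (fun N : ℕ => ∑ n ∈ Finset.Icc (1:ℕ) N,
          Real.sin (a / 2 ^ (n + 1)) ^ 2 * ∏ m ∈ Finset.Icc (1:ℕ) n, Real.cos (a / 2 ^ m))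
        Filter.atTop (nhds S) ∧
      Real.sin a / a = Real.cos (a / 2) ^ 2 + S := by
  refine ⟨sin a / a - cos (a / 2) ^ 2, ?_, by ring⟩
  have h_cos : Tendsto (fun N : ℕ ↦ cos (a / 2 ^ (N + 1)) ^ 2) atTop (𝓝 1) := by
    simpa using ((continuous_cos.tendsto 0).comp
      ((tendsto_div_two_pow_nhds_zero a).comp (tendsto_add_atTop_nat 1))).pow 2
  have h_lim := ((tendsto_prod_cos_div_two_pow a).mul h_cos).sub_const (cos (a / 2) ^ 2)
  rw [mul_one, sinc_of_ne_zero ha] at h_lim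
  refine h_lim.congr fun N ↦ ?_
  rw [← cos_sq_add_sum_sin_sq_mul_prod_cos]
  ring
end

section
/- For every nonzero real number a, sin(a)/a = ∑_{n=1}^{∞} ∑_{m=1}^{2^n - 1} (-1)^{m+1} 2^{-n} cos(m·a/2^n), where for each n the inner sum is finite and the outer series over n converges. -/
/-!
Write `S_N(a)` for the `N`-th partial sum and `c = a / 2 ^ (N + 1)`. Multiplying by `2 cos(x/2)`
makes each alternating inner sum telescope, and with this one checks the trigonometric identity
`sin c * (2 ^ (N + 1) * S_N(a) + 1) = sin (a - c)` by induction on `N`. Hence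
`2 ^ (N + 1) sin c * S_N(a) = sin (a - c) - sin c`, whose left factor tends to `a` and right side
to `sin a`.
-/

open Finset Filter Real Topology

noncomputable def dyadicCosSum (a : ℝ) (N : ℕ) : ℝ :=
  ∑ n ∈ Icc (1 : ℕ) N, ∑ m ∈ Icc (1 : ℕ) (2 ^ n - 1),
    (-1 : ℝ) ^ (m + 1) / 2 ^ n * cos (m * a / 2 ^ n)

lemma two_mul_cos_half_mul_sum_alternating_cos (x : ℝ) (K : ℕ) :
    2 * cos (x / 2) * ∑ m ∈ Icc (1 : ℕ) K, (-1 : ℝ) ^ (m + 1) * cos (m * x) =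
      cos (x / 2) - (-1) ^ K * cos ((K + 1 / 2) * x) := by
  induction K with
  | zero => simp [div_eq_inv_mul]
  | succ K ih =>
    rw [sum_Icc_succ_top (Nat.le_add_left 1 K)]
    have h₁ : cos ((K + 1 + 1 / 2) * x) =
        cos ((K + 1) * x) * cos (x / 2) - sin ((K + 1) * x) * sin (x / 2) := by
      rw [← cos_add]; ring_nf
    have h₂ : cos ((K + 1 / 2) * x) =
        cos ((K + 1) * x) * cos (x / 2) + sin ((K + 1) * x) * sin (x / 2) := by
      rw [← cos_sub]; ring_nf
    push_cast
    linear_combination ih - (-1 : ℝ) ^ K * (h₁ + h₂)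

lemma dense_setOf_cos_div_ne_zero {d : ℝ} (hd : d ≠ 0) : Dense {x : ℝ | cos (x / d) ≠ 0} := by
  have hzeros : {x : ℝ | cos (x / d) = 0} ⊆ Set.range fun k : ℤ => (2 * k + 1) * π / 2 * d := by
    intro x hx
    obtain ⟨k, hk⟩ := cos_eq_zero_iff.mp hx
    exact ⟨k, by simp only [← hk, div_mul_cancel₀ x hd]⟩
  exact ((Set.countable_range _).mono hzeros).dense_compl ℝ

lemma Continuous.eq_zero_of_mul_eq_zero {X R : Type*} [TopologicalSpace X] [TopologicalSpace R]
    [T2Space R] [MulZeroClass R] [NoZeroDivisors R] {f g : X → R} (hf : Continuous f)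
    (hg : Dense {x | g x ≠ 0}) (h : ∀ x, g x * f x = 0) : f = 0 :=
  hf.ext_on hg continuous_const fun x hx => (mul_eq_zero.mp (h x)).resolve_left hx

noncomputable def dyadicDefect (N : ℕ) (a : ℝ) : ℝ :=
  sin (a / 2 ^ (N + 1)) * (2 ^ (N + 1) * dyadicCosSum a N + 1) - sin (a - a / 2 ^ (N + 1))

lemma continuous_dyadicDefect (N : ℕ) : Continuous (dyadicDefect N) := by
  unfold dyadicDefect dyadicCosSum
  fun_prop

lemma dyadicDefect_zero : dyadicDefect 0 = 0 := by
  ext a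
  simp [dyadicDefect, dyadicCosSum, sub_half]

lemma cos_mul_dyadicDefect_succ (N : ℕ) (a : ℝ) :
    cos (a / 2 ^ (N + 2)) * dyadicDefect (N + 1) a = dyadicDefect N a := by
  set c := a / 2 ^ (N + 2) with hc
  have ha : a = 2 ^ (N + 2) * c := by rw [hc]; field_simp
  have hc2 : a / 2 ^ (N + 1) = 2 * c := by rw [hc]; ring
  have hodd : Odd (2 ^ (N + 1) - 1) :=
    Nat.Even.sub_odd Nat.one_le_two_pow ((Nat.even_pow).mpr ⟨even_two, N.succ_ne_zero⟩) odd_one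
  have hinner := two_mul_cos_half_mul_sum_alternating_cos (2 * c) (2 ^ (N + 1) - 1)
  rw [hodd.neg_one_pow, show 2 * c / 2 = c by ring,
    show (((2 ^ (N + 1) - 1 : ℕ) : ℝ) + 1 / 2) * (2 * c) = a - c by
      rw [Nat.cast_sub Nat.one_le_two_pow, ha]; push_cast; ring] at hinner
  have hsplit : 2 ^ (N + 2) * dyadicCosSum a (N + 1) = 2 * (2 ^ (N + 1) * dyadicCosSum a N) +
      2 * ∑ m ∈ Icc (1 : ℕ) (2 ^ (N + 1) - 1), (-1 : ℝ) ^ (m + 1) * cos (m * (2 * c)) := by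
    rw [dyadicCosSum, sum_Icc_succ_top (Nat.le_add_left 1 N), ← dyadicCosSum, mul_add, mul_sum,
      mul_sum]
    congr 1
    · ring
    · refine sum_congr rfl fun m _ => ?_
      rw [mul_div_assoc, hc2]
      field_simp
      ring
  have hsub : sin (a - 2 * c) = sin (a - c) * cos c - cos (a - c) * sin c := by
    rw [← sin_sub]; ring_nf
  unfold dyadicDefect
  rw [hc2, hsplit, sin_two_mul, hsub]
  linear_combination sin c * hinner

lemma dyadicDefect_eq_zero (N : ℕ) : dyadicDefect N = 0 := by
  induction N with
  | zero => exact dyadicDefect_zero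
  | succ N ih =>
    -- the recursion only pins the defect down off the zeros of `cos (a / 2 ^ (N + 2))`
    refine (continuous_dyadicDefect (N + 1)).eq_zero_of_mul_eq_zero
      (dense_setOf_cos_div_ne_zero (pow_ne_zero (N + 2) two_ne_zero)) fun a => ?_
    rw [cos_mul_dyadicDefect_succ, ih, Pi.zero_apply]

lemma sin_div_two_pow_mul_dyadicCosSum (N : ℕ) (a : ℝ) :
    sin (a / 2 ^ (N + 1)) * (2 ^ (N + 1) * dyadicCosSum a N + 1) = sin (a - a / 2 ^ (N + 1)) :=
  sub_eq_zero.mp (congrFun (dyadicDefect_eq_zero N) a)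

lemma tendsto_div_two_pow_atTop (a : ℝ) : Tendsto (fun N : ℕ => a / 2 ^ N) atTop (𝓝 0) :=
  tendsto_const_nhds.div_atTop (tendsto_pow_atTop_atTop_of_one_lt one_lt_two)

lemma tendsto_two_pow_mul_sin_div_two_pow (a : ℝ) :
    Tendsto (fun N : ℕ => 2 ^ N * sin (a / 2 ^ N)) atTop (𝓝 a) := by
  have h := ((continuous_sinc.tendsto 0).comp (tendsto_div_two_pow_atTop a)).const_mul a
  rw [sinc_zero, mul_one] at h
  refine h.congr fun N => ?_
  by_cases ha : a = 0
  · simp [ha]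
  · simp only [Function.comp_apply, sinc_of_ne_zero (div_ne_zero ha (pow_ne_zero N two_ne_zero))]
    field_simp

theorem stmt_3 (a : ℝ) (ha : a ≠ 0) :
    ∃ S : ℝ,
      Filter.Tendsto
        (fun N : ℕ => ∑ n ∈ Finset.Icc (1:ℕ) N, ∑ m ∈ Finset.Icc (1:ℕ) (2 ^ n - 1),
          (-1 : ℝ) ^ (m + 1) / 2 ^ n * Real.cos ((m:ℝ) * a / 2 ^ n))
        Filter.atTop (nhds S) ∧
      Real.sin a / a = S := by
  refine ⟨sin a / a, ?_, rfl⟩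
  set d : ℕ → ℝ := fun N => 2 ^ (N + 1) * sin (a / 2 ^ (N + 1))
  have hd : Tendsto d atTop (𝓝 a) :=
    (tendsto_two_pow_mul_sin_div_two_pow a).comp (tendsto_add_atTop_nat 1)
  have hc : Tendsto (fun N : ℕ => a / 2 ^ (N + 1)) atTop (𝓝 0) :=
    (tendsto_div_two_pow_atTop a).comp (tendsto_add_atTop_nat 1)
  have hdS : Tendsto (fun N => d N * dyadicCosSum a N) atTop (𝓝 (sin a)) := by
    have h := ((continuous_sin.tendsto (a - 0)).comp (tendsto_const_nhds.sub hc)).sub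
      ((continuous_sin.tendsto 0).comp hc)
    rw [sub_zero, sin_zero, sub_zero] at h
    refine h.congr fun N => ?_
    simp only [Function.comp_apply, d]
    linear_combination -sin_div_two_pow_mul_dyadicCosSum N a
  refine (hdS.div hd ha).congr' ?_
  filter_upwards [hd.eventually_ne ha] with N hN using mul_div_cancel_left₀ _ hN
end

section
/- Let b > 0 and let H : ℝ → ℝ be continuous on [-b, b]. Then ∫_{-b}^{b} H(x) dx = b ∑_{n=1}^{∞} ∑_{m=1}^{2^n - 1} (-1)^{m+1} 2^{-n} [H(m·b/2^n) + H(-m·b/2^n)], where for each n the inner sum is finite and the outer series over n converges. -/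
open Finset Filter Topology Set intervalIntegral MeasureTheory

/-!
Splitting the indices `m < 2 ^ (n + 1)` into even and odd ones, the alternating inner sum at
level `n + 1` is the difference of the means of `G x = H x + H (-x)` over the dyadic points
`m * b / 2 ^ (n + 1)` and `m * b / 2 ^ n` (up to the term `G 0 / 2 ^ (n + 1)` for `m = 0`), since
the even points of level `n + 1` are the points of level `n`. The partial sums therefore
telescope to the mean at level `N` minus `G 0 / 2 ^ N`; `b` times this mean is a left Riemann sum
of the continuous function `G`, which converges to `∫ x in 0..b, G x = ∫ x in -b..b, H x`.
-/

noncomputable def leftRiemannSum (f : ℝ → ℝ) (a b : ℝ) (N : ℕ) : ℝ :=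
  ∑ i ∈ range N, (b - a) / N * f (a + i * ((b - a) / N))

theorem abs_integral_sub_mul_le {f : ℝ → ℝ} {c d ε : ℝ} (hcd : c ≤ d)
    (hf : IntervalIntegrable f volume c d) (hε : ∀ x ∈ Icc c d, |f x - f c| ≤ ε) :
    |(∫ x in c..d, f x) - (d - c) * f c| ≤ (d - c) * ε := by
  have hsub : (∫ x in c..d, f x) - (d - c) * f c = ∫ x in c..d, (f x - f c) := by
    rw [integral_sub hf intervalIntegrable_const, intervalIntegral.integral_const, smul_eq_mul]
  rw [hsub, ← abs_of_nonneg (sub_nonneg.2 hcd), mul_comm, ← Real.norm_eq_abs]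
  refine norm_integral_le_of_norm_le_const fun x hx => (Real.norm_eq_abs _).trans_le (hε x ?_)
  rw [uIoc_of_le hcd] at hx
  exact Ioc_subset_Icc_self hx

theorem abs_integral_sub_leftRiemannSum_le {f : ℝ → ℝ} {a b ε : ℝ} {N : ℕ} (hab : a ≤ b)
    (hN : 0 < N) (hf : IntervalIntegrable f volume a b)
    (hε : ∀ x ∈ Icc a b, ∀ y ∈ Icc a b, |x - y| ≤ (b - a) / N → |f x - f y| ≤ ε) :
    |(∫ x in a..b, f x) - leftRiemannSum f a b N| ≤ (b - a) * ε := by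
  set h := (b - a) / N with hh_def
  set x : ℕ → ℝ := fun i => a + i * h
  have hN' : (0 : ℝ) < N := by exact_mod_cast hN
  have hh : 0 ≤ h := div_nonneg (sub_nonneg.2 hab) hN'.le
  have hx_succ : ∀ i, x (i + 1) - x i = h := fun i => by simp only [x]; push_cast; ring
  have hxN : x N = b := by simp only [x, hh_def]; field_simp; ring
  have hx_mem : ∀ i ≤ N, x i ∈ Icc a b := fun i hi => by
    have : (i : ℝ) * h ≤ N * h := mul_le_mul_of_nonneg_right (by exact_mod_cast hi) hh
    exact ⟨le_add_of_nonneg_right (by positivity), by simp only [x] at hxN ⊢; linarith⟩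
  have hint : ∀ i < N, IntervalIntegrable f volume (x i) (x (i + 1)) := fun i hi =>
    hf.mono_set <| by
      rw [uIcc_of_le hab]
      exact uIcc_subset_Icc (hx_mem i hi.le) (hx_mem (i + 1) hi)
  have hsplit : ∫ y in a..b, f y = ∑ i ∈ range N, ∫ y in x i..x (i + 1), f y := by
    rw [sum_integral_adjacent_intervals hint, hxN]
    simp [x]
  have hterm : ∀ i ∈ range N,
      |(∫ y in x i..x (i + 1), f y) - h * f (x i)| ≤ h * ε := fun i hi => by
    have hi := mem_range.1 hi
    have := abs_integral_sub_mul_le (by linarith [hx_succ i]) (hint i hi) fun y hy =>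
      hε y (Icc_subset_Icc (hx_mem i hi.le).1 (hx_mem (i + 1) hi).2 hy) (x i) (hx_mem i hi.le)
        (by rw [abs_of_nonneg (by linarith [hy.1])]; linarith [hy.2, hx_succ i])
    rwa [hx_succ] at this
  calc |(∫ y in a..b, f y) - leftRiemannSum f a b N|
      = |∑ i ∈ range N, ((∫ y in x i..x (i + 1), f y) - h * f (x i))| := by
        rw [hsplit, leftRiemannSum, sum_sub_distrib]
    _ ≤ ∑ i ∈ range N, h * ε := (abs_sum_le_sum_abs _ _).trans (sum_le_sum hterm)
    _ = (b - a) * ε := by rw [sum_const, card_range, nsmul_eq_mul, hh_def]; field_simp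

theorem tendsto_leftRiemannSum {f : ℝ → ℝ} {a b : ℝ} (hab : a ≤ b)
    (hf : ContinuousOn f (Icc a b)) :
    Tendsto (leftRiemannSum f a b) atTop (𝓝 (∫ x in a..b, f x)) := by
  rw [Metric.tendsto_atTop]
  intro ε hε
  have hε' : 0 < ε / (b - a + 1) := div_pos hε (by linarith)
  obtain ⟨δ, hδ, hfδ⟩ := Metric.uniformContinuousOn_iff_le.1
    (isCompact_Icc.uniformContinuousOn_of_continuous hf) _ hε'
  obtain ⟨N₀, hN₀⟩ := eventually_atTop.1
    ((tendsto_const_div_atTop_nhds_zero_nat (b - a)).eventually (ge_mem_nhds hδ))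
  refine ⟨max N₀ 1, fun N hN => ?_⟩
  rw [dist_comm, Real.dist_eq]
  calc |(∫ x in a..b, f x) - leftRiemannSum f a b N|
      ≤ (b - a) * (ε / (b - a + 1)) :=
        abs_integral_sub_leftRiemannSum_le hab (by omega) (hf.intervalIntegrable_of_Icc hab)
          fun x hx y hy hxy =>
            hfδ x hx y hy ((Real.dist_eq x y).trans_le (hxy.trans (hN₀ N (le_of_max_le_left hN))))
    _ < ε := by
        rw [mul_div_assoc', div_lt_iff₀ (by linarith)]
        nlinarith

noncomputable def dyadicMean (φ : ℝ → ℝ) (b : ℝ) (n : ℕ) : ℝ :=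
  ∑ m ∈ range (2 ^ n), φ ((m : ℝ) * b / 2 ^ n) / 2 ^ n

theorem sum_range_two_mul {M : Type*} [AddCommMonoid M] (u : ℕ → M) (n : ℕ) :
    ∑ m ∈ range (2 * n), u m = ∑ k ∈ range n, (u (2 * k) + u (2 * k + 1)) := by
  induction n with
  | zero => simp
  | succ n ih => rw [mul_add_one, sum_range_succ, sum_range_succ, sum_range_succ, ih, add_assoc]

theorem sum_range_alternating_eq_dyadicMean_sub (φ : ℝ → ℝ) (b : ℝ) (n : ℕ) :
    ∑ m ∈ range (2 ^ (n + 1)),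
        (-1 : ℝ) ^ (m + 1) / 2 ^ (n + 1) * φ ((m : ℝ) * b / 2 ^ (n + 1)) =
      dyadicMean φ b (n + 1) - dyadicMean φ b n := by
  have heven : ∀ k : ℕ, ((2 * k : ℕ) : ℝ) * b / 2 ^ (n + 1) = k * b / 2 ^ n := fun k => by
    push_cast; rw [pow_succ]; field_simp
  rw [dyadicMean, dyadicMean, pow_succ', sum_range_two_mul, sum_range_two_mul, ← sum_sub_distrib]
  refine sum_congr rfl fun k _ => ?_
  rw [heven]
  simp only [pow_succ, pow_mul]
  push_cast
  ring

theorem sum_Icc_alternating_eq_dyadicMean_sub (φ : ℝ → ℝ) (b : ℝ) (n : ℕ) :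
    ∑ m ∈ Icc (1 : ℕ) (2 ^ (n + 1) - 1),
        (-1 : ℝ) ^ (m + 1) / 2 ^ (n + 1) * φ ((m : ℝ) * b / 2 ^ (n + 1)) =
      dyadicMean φ b (n + 1) - dyadicMean φ b n + φ 0 / 2 ^ (n + 1) := by
  rw [Finset.Icc_sub_one_right_eq_Ico_of_not_isMin (by simp [isMin_iff_eq_bot]),
    sum_Ico_eq_sub _ Nat.one_le_two_pow, sum_range_alternating_eq_dyadicMean_sub]
  simp only [sum_range_one, zero_add, pow_one, Nat.cast_zero, zero_mul, zero_div]
  ring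

theorem sum_Icc_sum_Icc_alternating_eq_dyadicMean (φ : ℝ → ℝ) (b : ℝ) (N : ℕ) :
    ∑ n ∈ Icc (1 : ℕ) N, ∑ m ∈ Icc (1 : ℕ) (2 ^ n - 1),
        (-1 : ℝ) ^ (m + 1) / 2 ^ n * φ ((m : ℝ) * b / 2 ^ n) =
      dyadicMean φ b N - φ 0 / 2 ^ N := by
  induction N with
  | zero => simp [dyadicMean]
  | succ N ih =>
    rw [sum_Icc_succ_top (Nat.le_add_left 1 N), ih, sum_Icc_alternating_eq_dyadicMean_sub, pow_succ]
    ring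

theorem leftRiemannSum_two_pow_eq_mul_dyadicMean (φ : ℝ → ℝ) (b : ℝ) (n : ℕ) :
    leftRiemannSum φ 0 b (2 ^ n) = b * dyadicMean φ b n := by
  rw [leftRiemannSum, dyadicMean, mul_sum]
  refine sum_congr rfl fun m _ => ?_
  push_cast
  ring_nf

theorem integral_neg_left_eq_integral_add_comp_neg {E : Type*} [NormedAddCommGroup E]
    [NormedSpace ℝ E] {f : ℝ → E} {b : ℝ} (hb : 0 ≤ b) (hf : IntervalIntegrable f volume (-b) b) :
    ∫ x in -b..b, f x = ∫ x in 0..b, (f x + f (-x)) := by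
  have hzero : (0 : ℝ) ∈ uIcc (-b) b := by
    rw [Set.uIcc_of_le (by linarith)]
    exact ⟨by linarith, hb⟩
  have hleft : IntervalIntegrable f volume (-b) 0 := hf.mono_set (uIcc_subset_uIcc_left hzero)
  have hright : IntervalIntegrable f volume 0 b := hf.mono_set (uIcc_subset_uIcc_right hzero)
  have hneg : IntervalIntegrable (fun x => f (-x)) volume 0 b := by
    simpa using ((IntervalIntegrable.iff_comp_neg (by finiteness)).1 hleft).symm
  rw [integral_add hright hneg, integral_comp_neg, neg_zero,
    ← integral_add_adjacent_intervals hleft hright, add_comm]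

theorem tendsto_dyadicMean {φ : ℝ → ℝ} {b : ℝ} (hb : 0 < b) (hφ : ContinuousOn φ (Icc 0 b)) :
    Tendsto (dyadicMean φ b) atTop (𝓝 ((∫ x in 0..b, φ x) / b)) := by
  have hR := (tendsto_leftRiemannSum hb.le hφ).comp (tendsto_pow_atTop_atTop_of_one_lt one_lt_two)
  refine (hR.div_const b).congr fun n => ?_
  rw [Function.comp_apply, leftRiemannSum_two_pow_eq_mul_dyadicMean, mul_div_cancel_left₀ _ hb.ne']

theorem stmt_4 (b : ℝ) (hb : 0 < b) (H : ℝ → ℝ)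
    (hH : ContinuousOn H (Set.Icc (-b) b)) :
    ∃ S : ℝ,
      Filter.Tendsto
        (fun N : ℕ => ∑ n ∈ Finset.Icc (1:ℕ) N, ∑ m ∈ Finset.Icc (1:ℕ) (2 ^ n - 1),
          (-1 : ℝ) ^ (m + 1) / 2 ^ n * (H ((m:ℝ) * b / 2 ^ n) + H (-((m:ℝ) * b / 2 ^ n))))
        Filter.atTop (nhds S) ∧
      ∫ x in (-b)..b, H x = b * S := by
  set G : ℝ → ℝ := fun x => H x + H (-x)
  have hG : ContinuousOn G (Icc 0 b) :=
    (hH.mono (Icc_subset_Icc (by linarith) le_rfl)).add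
      (hH.comp continuous_neg.continuousOn fun x hx => ⟨neg_le_neg hx.2, by linarith [hx.1]⟩)
  have hvanish : Tendsto (fun N : ℕ => G 0 / 2 ^ N) atTop (𝓝 0) :=
    tendsto_const_nhds.div_atTop (tendsto_pow_atTop_atTop_of_one_lt one_lt_two)
  refine ⟨(∫ x in 0..b, G x) / b, ?_, ?_⟩
  · rw [← sub_zero ((∫ x in 0..b, G x) / b)]
    exact ((tendsto_dyadicMean hb hG).sub hvanish).congr fun N =>
      (sum_Icc_sum_Icc_alternating_eq_dyadicMean G b N).symm
  · rw [integral_neg_left_eq_integral_add_comp_neg hb.le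
      (hH.intervalIntegrable_of_Icc (by linarith)), mul_div_cancel₀ _ hb.ne']
end

section
/- For every real number x, exp(x) = 1 + x · ∑_{n=1}^{∞} ∑_{m=1}^{2^n - 1} (-1)^{m+1} 2^{-n} exp(m·x/2^n), where for each n the inner sum is finite and the outer series over n converges. -/
/-!
The `n`-th inner sum is a difference of left Riemann sums of `t ↦ exp (t * x)` on `[0, 1]`:
splitting the grid `m / 2 ^n` into even and odd `m` shows that it equals `T n - T (n - 1) + 2 ^ (-n)`,
where `T n` is the Riemann sum on the grid of mesh `2 ^ (-n)`. So the partial sums telescope to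
`T N - 2 ^ (-N)`. With `φ := dslope exp 0`, i.e. `φ t = (exp t - 1) / t` and `φ 0 = 1`, the geometric
sum gives `T N * φ (x / 2 ^ N) = φ x`, hence `T N → φ x`, and `exp x = 1 + x * φ x`.
-/

open Finset Filter Topology

lemma Finset.sum_Icc_one_sub_one {M : Type*} [AddCommGroup M] (g : ℕ → M) {n : ℕ} (hn : 0 < n) :
    ∑ m ∈ Icc 1 (n - 1), g m = ∑ m ∈ range n, g m - g 0 := by
  rw [show Icc 1 (n - 1) = Ico 1 n from rfl, sum_Ico_eq_sub g hn, sum_range_one]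

lemma Finset.sum_range_two_mul_neg_one_pow {R : Type*} [CommRing R] (a : ℕ → R) (K : ℕ) :
    ∑ m ∈ range (2 * K), (-1) ^ m * a m
      = 2 * ∑ j ∈ range K, a (2 * j) - ∑ m ∈ range (2 * K), a m := by
  induction K with
  | zero => simp
  | succ K ih =>
    simp only [mul_add, mul_one, sum_range_succ, ih, pow_succ, pow_mul]
    norm_num
    ring

lemma tendsto_div_two_pow (c : ℝ) : Tendsto (fun N : ℕ => c / 2 ^ N) atTop (𝓝 0) := by
  simpa [div_eq_mul_inv] using
    (tendsto_pow_atTop_nhds_zero_of_lt_one (r := (2 : ℝ)⁻¹) (by norm_num) (by norm_num)).const_mul c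

noncomputable def dyadicLeftSum (f : ℝ → ℝ) (n : ℕ) : ℝ :=
  (∑ m ∈ range (2 ^ n), f (m / 2 ^ n)) / 2 ^ n

lemma alternating_dyadic_sum_succ_eq (f : ℝ → ℝ) (n : ℕ) :
    ∑ m ∈ Icc (1 : ℕ) (2 ^ (n + 1) - 1), (-1 : ℝ) ^ (m + 1) / 2 ^ (n + 1) * f (m / 2 ^ (n + 1))
      = dyadicLeftSum f (n + 1) - dyadicLeftSum f n + f 0 / 2 ^ (n + 1) := by
  have hsplit := sum_range_two_mul_neg_one_pow (fun m => f (m / 2 ^ (n + 1))) (2 ^ n)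
  have heven : ∀ j : ℕ, ((2 * j : ℕ) : ℝ) / 2 ^ (n + 1) = j / 2 ^ n := fun j => by
    push_cast
    rw [pow_succ]
    field_simp
  simp only [heven, ← pow_succ'] at hsplit
  have hterm : ∀ m : ℕ, (-1 : ℝ) ^ (m + 1) / 2 ^ (n + 1) * f (m / 2 ^ (n + 1))
      = -((-1) ^ m * f (m / 2 ^ (n + 1))) / 2 ^ (n + 1) := fun m => by ring
  rw [sum_congr rfl fun m _ => hterm m, ← sum_div, sum_neg_distrib,
    sum_Icc_one_sub_one _ (by positivity), hsplit, dyadicLeftSum, dyadicLeftSum]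
  simp only [pow_zero, one_mul, Nat.cast_zero, zero_div]
  rw [pow_succ]
  field_simp
  ring

lemma sum_alternating_dyadic_sums_eq (f : ℝ → ℝ) (N : ℕ) :
    ∑ n ∈ Icc (1 : ℕ) N, ∑ m ∈ Icc (1 : ℕ) (2 ^ n - 1), (-1 : ℝ) ^ (m + 1) / 2 ^ n * f (m / 2 ^ n)
      = dyadicLeftSum f N - f 0 / 2 ^ N := by
  induction N with
  | zero => simp [dyadicLeftSum]
  | succ N ih =>
    rw [sum_Icc_succ_top (by omega), ih, alternating_dyadic_sum_succ_eq, pow_succ]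
    ring

lemma dyadicLeftSum_exp_mul_mul_dslope (x : ℝ) (N : ℕ) :
    dyadicLeftSum (fun t => Real.exp (t * x)) N * dslope Real.exp 0 (x / 2 ^ N)
      = dslope Real.exp 0 x := by
  rcases eq_or_ne x 0 with rfl | hx
  · simp [dyadicLeftSum]
  set q := Real.exp (x / 2 ^ N)
  have hpow : ∀ m : ℕ, Real.exp ((m : ℝ) / 2 ^ N * x) = q ^ m := fun m => by
    rw [← Real.exp_nat_mul]
    ring_nf
  have hgeom : (∑ m ∈ range (2 ^ N), q ^ m) * (q - 1) = Real.exp x - 1 := by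
    rw [geom_sum_mul, ← Real.exp_nat_mul]
    push_cast
    field_simp
  have hslope : ∀ t : ℝ, t * dslope Real.exp 0 t = Real.exp t - 1 := fun t => by
    simpa using sub_smul_dslope Real.exp 0 t
  apply mul_left_cancel₀ hx
  calc x * (dyadicLeftSum (fun t => Real.exp (t * x)) N * dslope Real.exp 0 (x / 2 ^ N))
      = (∑ m ∈ range (2 ^ N), q ^ m) * (x / 2 ^ N * dslope Real.exp 0 (x / 2 ^ N)) := by
        simp only [dyadicLeftSum, hpow]
        field_simp
    _ = x * dslope Real.exp 0 x := by rw [hslope, hslope, hgeom]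

lemma tendsto_dyadicLeftSum_exp_mul (x : ℝ) :
    Tendsto (dyadicLeftSum fun t => Real.exp (t * x)) atTop (𝓝 (dslope Real.exp 0 x)) := by
  have hslope : Tendsto (fun N : ℕ => dslope Real.exp 0 (x / 2 ^ N)) atTop (𝓝 1) := by
    have hcont := continuousAt_dslope_same.mpr (Real.differentiableAt_exp (x := 0))
    have := hcont.tendsto.comp (tendsto_div_two_pow x)
    rwa [dslope_same, Real.deriv_exp, Real.exp_zero] at this
  have hquot := tendsto_const_nhds (x := dslope Real.exp 0 x) |>.div hslope one_ne_zero
  rw [div_one] at hquot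
  refine hquot.congr' ((hslope.eventually_ne one_ne_zero).mono fun N hN => ?_)
  exact (eq_div_of_mul_eq hN (dyadicLeftSum_exp_mul_mul_dslope x N)).symm

theorem stmt_8 (x : ℝ) :
    ∃ S : ℝ,
      Filter.Tendsto
        (fun N : ℕ => ∑ n ∈ Finset.Icc (1:ℕ) N, ∑ m ∈ Finset.Icc (1:ℕ) (2 ^ n - 1),
          (-1 : ℝ) ^ (m + 1) / 2 ^ n * Real.exp ((m:ℝ) * x / 2 ^ n))
        Filter.atTop (nhds S) ∧
      Real.exp x = 1 + x * S := by
  refine ⟨dslope Real.exp 0 x, ?_, ?_⟩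
  · have hpartial := sum_alternating_dyadic_sums_eq (fun t => Real.exp (t * x))
    simp only [fun m n : ℕ => div_mul_eq_mul_div (m : ℝ) (2 ^ n) x, zero_mul, Real.exp_zero]
      at hpartial
    simpa only [hpartial, sub_zero] using
      (tendsto_dyadicLeftSum_exp_mul x).sub (tendsto_div_two_pow 1)
  · simpa [eq_sub_iff_add_eq', eq_comm] using sub_smul_dslope Real.exp 0 x
end
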